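/- arXiv:2112.13081 — 2 statements merged into one kernel-verified Lean document; each statement's English description precedes it below -/
import Mathlib

section
/- Key coercivity inequality for the propagation sub/super-solutions. Let U_0 be as in the standing-wave hypotheses, and let b > 0 be such that f'(U_0(z)) + (φ'(U_0))''(z) < 0 whenever U_0(z) ∈ J_1-values, where J_1 := { z : U_0(z) ∈ [α_-, α_- + b] ∪ [α_+ - b, α_+] }. Define β := - sup{ ( f'(U_0(z)) + (φ'(U_0))''(z) ) / 3 : z ∈ J_1 } (a positive number). Then there exists σ_0 > 0 such that for every σ ∈ (0, σ_0) and every z ∈ R: U_0'(z) - σ ( f'(U_0(z)) + (φ'(U_0))''(z) ) ≥ 3 σ β. -/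
open MeasureTheory Real Set Filter Topology

/-- Key coercivity inequality for the propagation sub/super-
solutions: with `β = -sup{(f'(U₀(z)) + (φ'(U₀))''(z))/3 : z ∈ J₁}` one has
`β > 0` and, for all small `σ > 0` and all `z`,
`U₀'(z) - σ(f'(U₀(z)) + (φ'(U₀))''(z)) ≥ 3σβ`. -/
theorem propagation_coercivity_inequality
    (f : ℝ → ℝ) (αm αc αp : ℝ)
    (hf : ContDiff ℝ 2 f)
    (hαs : αm < αc ∧ αc < αp)
    (hzeros : ∀ s : ℝ, f s = 0 ↔ s = αm ∨ s = αc ∨ s = αp)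
    (hfm : deriv f αm < 0) (hfp : deriv f αp < 0) (hfc : 0 < deriv f αc)
    (hfbelow : ∀ s : ℝ, s < αm → 0 < f s) (hfabove : ∀ s : ℝ, αp < s → f s < 0)
    (φ : ℝ → ℝ) (Cφ : ℝ) (hCφ : 0 < Cφ)
    (hφ : ContDiff ℝ 4 φ) (hφ' : ∀ s : ℝ, Cφ ≤ deriv φ s)
    (hbal : ∫ s in αm..αp, deriv φ s * f s = 0)
    (U0 : ℝ → ℝ)
    (hU0bdd : ∃ M : ℝ, ∀ z : ℝ, |U0 z| ≤ M)
    (hU0mono : StrictMono U0)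
    (hU0C2 : ContDiff ℝ 2 U0)
    (hU0ode : ∀ z : ℝ, deriv (deriv (fun y => φ (U0 y))) z + f (U0 z) = 0)
    (hU0m : Tendsto U0 atBot (nhds αm))
    (hU0p : Tendsto U0 atTop (nhds αp))
    (hU0d : Tendsto (fun z => deriv (fun y => φ (U0 y)) z) atBot (nhds 0))
    (b : ℝ) (hb : 0 < b)
    (hbneg : ∀ z : ℝ,
      U0 z ∈ Icc αm (αm + b) ∪ Icc (αp - b) αp →
      deriv f (U0 z) + deriv (deriv (fun y => deriv φ (U0 y))) z < 0)
    (β : ℝ)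
    (hβ : β = -sSup ((fun z =>
        (deriv f (U0 z) + deriv (deriv (fun y => deriv φ (U0 y))) z) / 3) ''
      {z : ℝ | U0 z ∈ Icc αm (αm + b) ∪ Icc (αp - b) αp})) :
    0 < β ∧
    ∃ σ₀ > (0 : ℝ), ∀ σ : ℝ, 0 < σ → σ < σ₀ → ∀ z : ℝ,
      3 * σ * β ≤
        deriv U0 z -
          σ * (deriv f (U0 z) + deriv (deriv (fun y => deriv φ (U0 y))) z) := by
  obtain ⟨hmc, hcp⟩ := hαs
  have hmp : αm < αp := hmc.trans hcp
  -- smoothness bookkeeping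
  have hφ3 : ContDiff ℝ 3 (deriv φ) :=
    (contDiff_succ_iff_deriv.mp (show ContDiff ℝ (3+1) φ from by norm_num [hφ])).2.2
  have hφ2 : ContDiff ℝ 2 (deriv (deriv φ)) :=
    (contDiff_succ_iff_deriv.mp (show ContDiff ℝ (2+1) (deriv φ) from by norm_num [hφ3])).2.2
  have hφ1 : ContDiff ℝ 1 (deriv (deriv (deriv φ))) :=
    (contDiff_succ_iff_deriv.mp
      (show ContDiff ℝ (1+1) (deriv (deriv φ)) from by norm_num [hφ2])).2.2
  have hφd : Differentiable ℝ φ := hφ.differentiable (by norm_num)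
  have hφ'd : Differentiable ℝ (deriv φ) := hφ3.differentiable (by norm_num)
  have hφ''d : Differentiable ℝ (deriv (deriv φ)) := hφ2.differentiable (by norm_num)
  have hφ'c : Continuous (deriv φ) := hφ'd.continuous
  have hφ''c : Continuous (deriv (deriv φ)) := hφ''d.continuous
  have hφ'''c : Continuous (deriv (deriv (deriv φ))) := (hφ1.differentiable one_ne_zero).continuous
  have hf1 : ContDiff ℝ 1 (deriv f) :=
    (contDiff_succ_iff_deriv.mp (show ContDiff ℝ (1+1) f from by norm_num [hf])).2.2
  have hf'c : Continuous (deriv f) := (hf1.differentiable one_ne_zero).continuous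
  have hfcont : Continuous f := hf.continuous
  have hfd : ∀ x, HasDerivAt f (deriv f x) x :=
    fun x => ((hf.differentiable (by norm_num)) x).hasDerivAt
  have hU0d1 : Differentiable ℝ U0 := hU0C2.differentiable (by norm_num)
  have hU0c : Continuous U0 := hU0d1.continuous
  have hU1 : ContDiff ℝ 1 (deriv U0) :=
    (contDiff_succ_iff_deriv.mp (show ContDiff ℝ (1+1) U0 from by norm_num [hU0C2])).2.2
  have hU0'd : Differentiable ℝ (deriv U0) := hU1.differentiable one_ne_zero
  have hU0'c : Continuous (deriv U0) := hU0'd.continuous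
  have hfαm : f αm = 0 := (hzeros αm).mpr (Or.inl rfl)
  have hfαc : f αc = 0 := (hzeros αc).mpr (Or.inr (Or.inl rfl))
  have hfαp : f αp = 0 := (hzeros αp).mpr (Or.inr (Or.inr rfl))
  have hCφ' : ∀ s : ℝ, 0 < deriv φ s := fun s => lt_of_lt_of_le hCφ (hφ' s)
  -- strict bounds on U0
  have hlow : ∀ z, αm < U0 z := by
    intro z
    have hle : ∀ y : ℝ, αm ≤ U0 y := by
      intro y
      refine le_of_tendsto hU0m ?_
      rw [eventually_atBot]
      exact ⟨y - 1, fun x hx => (hU0mono (by linarith : x < y)).le⟩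
    exact lt_of_le_of_lt (hle (z - 1)) (hU0mono (by linarith : z - 1 < z))
  have hhigh : ∀ z, U0 z < αp := by
    intro z
    have hle : ∀ y : ℝ, U0 y ≤ αp := by
      intro y
      refine ge_of_tendsto hU0p ?_
      rw [eventually_atTop]
      exact ⟨y + 1, fun x hx => (hU0mono (by linarith : y < x)).le⟩
    exact lt_of_lt_of_le (hU0mono (by linarith : z < z + 1)) (hle (z + 1))
  -- chain rule helper
  have hchain : ∀ (ψ : ℝ → ℝ), Differentiable ℝ ψ → ∀ z,
      deriv (fun y => ψ (U0 y)) z = deriv ψ (U0 z) * deriv U0 z :=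
    fun ψ hψ z => deriv_comp z (hψ _) (hU0d1 z)
  have hvd : ∀ z, deriv (fun y => φ (U0 y)) z = deriv φ (U0 z) * deriv U0 z := hchain φ hφd
  have hvC2 : ContDiff ℝ 2 (fun y => φ (U0 y)) := (hφ.of_le (by norm_num)).comp hU0C2
  have hdvd : Differentiable ℝ (deriv (fun y => φ (U0 y))) :=
    ((contDiff_succ_iff_deriv.mp
      (show ContDiff ℝ (1+1) (fun y => φ (U0 y)) from by norm_num [hvC2])).2.2).differentiable
      one_ne_zero
  -- deriv U0 nonneg
  have hU0'nn : ∀ z, 0 ≤ deriv U0 z := by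
    intro z
    have hh : Tendsto (slope U0 z) (𝓝[>] z) (𝓝 (deriv U0 z)) :=
      (hasDerivAt_iff_tendsto_slope.mp (hU0d1 z).hasDerivAt).mono_left
        (nhdsWithin_mono _ fun x hx => ne_of_gt hx)
    refine ge_of_tendsto hh ?_
    filter_upwards [self_mem_nhdsWithin] with x hx
    have h1 := hU0mono (mem_Ioi.mp hx)
    have h2 : (0:ℝ) < x - z := sub_pos.mpr (mem_Ioi.mp hx)
    rw [slope_def_field]
    exact div_nonneg (by linarith) (by linarith)
  -- sign of f on the middle intervals
  have fsign1 : ∀ s, αm < s → s < αc → f s < 0 := by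
    intro s hs1 hs2
    have hslope : Tendsto (slope f αm) (𝓝[>] αm) (𝓝 (deriv f αm)) :=
      (hasDerivAt_iff_tendsto_slope.mp (hfd αm)).mono_left
        (nhdsWithin_mono _ fun x hx => ne_of_gt hx)
    have hev : ∀ᶠ t in 𝓝[>] αm, slope f αm t < 0 := hslope.eventually_lt_const hfm
    have hev2 : Ioo αm s ∈ 𝓝[>] αm := Ioo_mem_nhdsGT hs1
    obtain ⟨t, ht1, ht2⟩ := (hev.and (eventually_of_mem hev2 fun x hx => hx)).exists
    have hft : f t < 0 := by
      rw [slope_def_field, hfαm, sub_zero] at ht1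
      by_contra h
      exact absurd (div_nonneg (not_lt.mp h) (by linarith [ht2.1])) (not_le.mpr ht1)
    rcases lt_trichotomy (f s) 0 with h | h | h
    · exact h
    · exfalso
      rcases (hzeros s).mp h with rfl | rfl | rfl <;> linarith
    · exfalso
      have h0 : (0:ℝ) ∈ Ioo (f t) (f s) := ⟨hft, h⟩
      obtain ⟨x, hx1, hx2⟩ := intermediate_value_Ioo ht2.2.le hfcont.continuousOn h0
      rcases (hzeros x).mp hx2 with rfl | rfl | rfl
      · linarith [ht2.1, hx1.1]
      · linarith [hx1.2]
      · linarith [hx1.2]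
  have fsign2 : ∀ s, αc < s → s < αp → 0 < f s := by
    intro s hs1 hs2
    have hslope : Tendsto (slope f αp) (𝓝[<] αp) (𝓝 (deriv f αp)) :=
      (hasDerivAt_iff_tendsto_slope.mp (hfd αp)).mono_left
        (nhdsWithin_mono _ fun x hx => ne_of_lt hx)
    have hev : ∀ᶠ t in 𝓝[<] αp, slope f αp t < 0 := hslope.eventually_lt_const hfp
    have hev2 : Ioo s αp ∈ 𝓝[<] αp := Ioo_mem_nhdsLT hs2
    obtain ⟨t, ht1, ht2⟩ := (hev.and (eventually_of_mem hev2 fun x hx => hx)).exists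
    have hft : 0 < f t := by
      rw [slope_def_field, hfαp, sub_zero] at ht1
      by_contra h
      have : 0 ≤ f t / (t - αp) := by
        rw [div_nonneg_iff]
        exact Or.inr ⟨not_lt.mp h, by linarith [ht2.2]⟩
      exact absurd this (not_le.mpr ht1)
    rcases lt_trichotomy (f s) 0 with h | h | h
    · exfalso
      have h0 : (0:ℝ) ∈ Ioo (f s) (f t) := ⟨h, hft⟩
      obtain ⟨x, hx1, hx2⟩ := intermediate_value_Ioo ht2.1.le hfcont.continuousOn h0
      rcases (hzeros x).mp hx2 with rfl | rfl | rfl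
      · linarith [hx1.1]
      · linarith [hx1.1]
      · linarith [hx1.2, ht2.2]
    · exfalso
      rcases (hzeros s).mp h with rfl | rfl | rfl <;> linarith
    · exact h
  -- the potential P
  have hPcontInt : Continuous (fun s => deriv φ s * f s) := hφ'c.mul hfcont
  have hPint : ∀ a b : ℝ, IntervalIntegrable (fun s => deriv φ s * f s) volume a b :=
    fun a b => hPcontInt.intervalIntegrable a b
  have hPd : ∀ u : ℝ, HasDerivAt (fun u => ∫ s in αm..u, deriv φ s * f s)
      (deriv φ u * f u) u := by
    intro u
    exact intervalIntegral.integral_hasDerivAt_right (hPint αm u)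
      (hPcontInt.stronglyMeasurableAtFilter _ _) hPcontInt.continuousAt
  have hPdiff : Differentiable ℝ (fun u => ∫ s in αm..u, deriv φ s * f s) :=
    fun u => (hPd u).differentiableAt
  have hPcont : Continuous (fun u => ∫ s in αm..u, deriv φ s * f s) := hPdiff.continuous
  have hPm : (∫ s in αm..αm, deriv φ s * f s) = 0 := intervalIntegral.integral_same
  have hPneg : ∀ u, αm < u → u < αp → (∫ s in αm..u, deriv φ s * f s) < 0 := by
    intro u h1 h2
    rcases le_or_gt u αc with hc | hc
    · have hpos : 0 < ∫ s in αm..u, -(deriv φ s * f s) := by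
        refine intervalIntegral.intervalIntegral_pos_of_pos_on (hPint αm u).neg ?_ h1
        intro x hx
        have hfx := fsign1 x hx.1 (lt_of_lt_of_le hx.2 hc)
        have hpx := hCφ' x
        nlinarith
      rw [intervalIntegral.integral_neg] at hpos
      linarith
    · have hsplit := intervalIntegral.integral_add_adjacent_intervals (hPint αm u) (hPint u αp)
      have hpos : 0 < ∫ s in u..αp, deriv φ s * f s := by
        refine intervalIntegral.intervalIntegral_pos_of_pos_on (hPint u αp) ?_ h2
        intro x hx
        exact mul_pos (hCφ' x) (fsign2 x (hc.trans hx.1) hx.2)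
      rw [hbal] at hsplit
      linarith
  -- energy identity
  have hE : ∀ z : ℝ, HasDerivAt (fun z => (deriv (fun y => φ (U0 y)) z)^2/2 +
      ∫ s in αm..(U0 z), deriv φ s * f s) 0 z := by
    intro z
    have h1 : HasDerivAt (fun z => deriv (fun y => φ (U0 y)) z)
        (deriv (deriv (fun y => φ (U0 y))) z) z := (hdvd z).hasDerivAt
    have h2 : HasDerivAt (fun z => (deriv (fun y => φ (U0 y)) z)^2/2)
        (deriv (fun y => φ (U0 y)) z * deriv (deriv (fun y => φ (U0 y))) z) z := by
      have h := (h1.fun_mul h1).div_const 2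
      rw [show (fun x => deriv (fun y => φ (U0 y)) x * deriv (fun y => φ (U0 y)) x / 2)
          = fun x => (deriv (fun y => φ (U0 y)) x)^2/2 from funext fun x => by ring] at h
      refine h.congr_deriv ?_
      ring
    have h3 : HasDerivAt (fun z => ∫ s in αm..(U0 z), deriv φ s * f s)
        (deriv φ (U0 z) * f (U0 z) * deriv U0 z) z :=
      (hPd (U0 z)).comp z (hU0d1 z).hasDerivAt
    have h4 := h2.fun_add h3
    refine h4.congr_deriv ?_
    have hode := hU0ode z
    rw [hvd z, show deriv (deriv (fun y => φ (U0 y))) z = -f (U0 z) from by linarith]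
    ring
  have hEconst : ∀ x y : ℝ, ((deriv (fun y => φ (U0 y)) x)^2/2 +
      ∫ s in αm..(U0 x), deriv φ s * f s) = ((deriv (fun y => φ (U0 y)) y)^2/2 +
      ∫ s in αm..(U0 y), deriv φ s * f s) :=
    fun x y => is_const_of_deriv_eq_zero (fun z => (hE z).differentiableAt)
      (fun z => (hE z).deriv) x y
  have hE0 : ∀ z : ℝ, ((deriv (fun y => φ (U0 y)) z)^2/2 +
      ∫ s in αm..(U0 z), deriv φ s * f s) = 0 := by
    have hlim : Tendsto (fun z => (deriv (fun y => φ (U0 y)) z)^2/2 +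
        ∫ s in αm..(U0 z), deriv φ s * f s) atBot (nhds 0) := by
      have h1 : Tendsto (fun z => (deriv (fun y => φ (U0 y)) z)^2/2) atBot (nhds 0) := by
        have := (hU0d.pow 2).div_const 2
        simpa using this
      have h2 : Tendsto (fun z => ∫ s in αm..(U0 z), deriv φ s * f s) atBot (nhds 0) := by
        have := (hPcont.tendsto αm).comp hU0m
        simpa [hPm, Function.comp_def] using this
      simpa using h1.add h2
    intro z
    have hzc : Tendsto (fun w : ℝ => (deriv (fun y => φ (U0 y)) z)^2/2 +
        ∫ s in αm..(U0 z), deriv φ s * f s) atBot (nhds 0) :=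
      hlim.congr (fun w => hEconst w z)
    exact (tendsto_nhds_unique hzc tendsto_const_nhds).symm
  -- square of the derivative and positivity
  have hPU0neg : ∀ z : ℝ, (∫ s in αm..(U0 z), deriv φ s * f s) < 0 :=
    fun z => hPneg _ (hlow z) (hhigh z)
  have hv'sq : ∀ z : ℝ, (deriv (fun y => φ (U0 y)) z)^2 =
      -(2 * ∫ s in αm..(U0 z), deriv φ s * f s) := by
    intro z
    have := hE0 z
    linarith
  have hdvnn : ∀ z, 0 ≤ deriv (fun y => φ (U0 y)) z := by
    intro z
    rw [hvd z]
    exact mul_nonneg (hCφ' _).le (hU0'nn z)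
  have hdvpos : ∀ z, 0 < deriv (fun y => φ (U0 y)) z := by
    intro z
    rcases eq_or_lt_of_le (hdvnn z) with h | h
    · exfalso
      have := hv'sq z
      rw [← h] at this
      have h2 := hPU0neg z
      nlinarith
    · exact h
  have hU0'pos : ∀ z, 0 < deriv U0 z := by
    intro z
    rcases eq_or_lt_of_le (hU0'nn z) with h | h
    · exfalso
      have := hvd z
      rw [← h, mul_zero] at this
      exact absurd this (ne_of_gt (hdvpos z))
    · exact h
  -- limits of deriv v at both ends
  have hdveq : ∀ z, deriv (fun y => φ (U0 y)) z =
      Real.sqrt (-(2 * ∫ s in αm..(U0 z), deriv φ s * f s)) := by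
    intro z
    rw [← hv'sq z, Real.sqrt_sq (hdvnn z)]
  have hPp : (∫ s in αm..αp, deriv φ s * f s) = 0 := hbal
  have hdvtop : Tendsto (fun z => deriv (fun y => φ (U0 y)) z) atTop (nhds 0) := by
    have hP : Tendsto (fun z => ∫ s in αm..(U0 z), deriv φ s * f s) atTop
        (nhds (∫ s in αm..αp, deriv φ s * f s)) := (hPcont.tendsto αp).comp hU0p
    have h1 : Tendsto (fun z => -(2 * ∫ s in αm..(U0 z), deriv φ s * f s)) atTop
        (nhds (-(2 * ∫ s in αm..αp, deriv φ s * f s))) := (hP.const_mul 2).neg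
    have h2 := (Real.continuous_sqrt.tendsto _).comp h1
    rw [hPp] at h2
    simp only [mul_zero, neg_zero, Real.sqrt_zero] at h2
    exact h2.congr fun z => (hdveq z).symm
  -- limits of deriv U0 at both ends
  have hU0'eq : ∀ z, deriv U0 z = deriv (fun y => φ (U0 y)) z / deriv φ (U0 z) := by
    intro z
    rw [eq_div_iff (ne_of_gt (hCφ' (U0 z)))]
    rw [hvd z]
    ring
  have hU0'top : Tendsto (deriv U0) atTop (nhds 0) := by
    have hden : Tendsto (fun z => deriv φ (U0 z)) atTop (nhds (deriv φ αp)) :=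
      (hφ'c.tendsto _).comp hU0p
    have := hdvtop.div hden (ne_of_gt (hCφ' αp))
    rw [zero_div] at this
    exact this.congr fun z => (hU0'eq z).symm
  have hU0'bot : Tendsto (deriv U0) atBot (nhds 0) := by
    have hden : Tendsto (fun z => deriv φ (U0 z)) atBot (nhds (deriv φ αm)) :=
      (hφ'c.tendsto _).comp hU0m
    have := hU0d.div hden (ne_of_gt (hCφ' αm))
    rw [zero_div] at this
    exact this.congr fun z => (hU0'eq z).symm
  -- second derivative of U0
  have hvdf : deriv (fun y => φ (U0 y)) = fun z => deriv φ (U0 z) * deriv U0 z := funext hvd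
  have hU0''eq : ∀ z, deriv (deriv U0) z =
      (-(f (U0 z)) - deriv (deriv φ) (U0 z) * deriv U0 z * deriv U0 z) / deriv φ (U0 z) := by
    intro z
    have hdd : deriv (deriv (fun y => φ (U0 y))) z =
        deriv (deriv φ) (U0 z) * deriv U0 z * deriv U0 z +
          deriv φ (U0 z) * deriv (deriv U0) z := by
      have hca : DifferentiableAt ℝ (fun z => deriv φ (U0 z)) z :=
        DifferentiableAt.comp z (hφ'd (U0 z)) (hU0d1 z)
      rw [hvdf, deriv_fun_mul hca (hU0'd z), hchain (deriv φ) hφ'd z]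
    have h0 := hU0ode z
    rw [hdd] at h0
    rw [eq_div_iff (ne_of_gt (hCφ' (U0 z)))]
    nlinarith [h0]
  have hU0''lim : ∀ (l : Filter ℝ) (a : ℝ), Tendsto U0 l (nhds a) → f a = 0 →
      Tendsto (deriv U0) l (nhds 0) → Tendsto (deriv (deriv U0)) l (nhds 0) := by
    intro l a hU hfa hU'
    have hnum : Tendsto (fun z => -(f (U0 z)) - deriv (deriv φ) (U0 z) * deriv U0 z * deriv U0 z)
        l (nhds (-(f a) - deriv (deriv φ) a * 0 * 0)) :=
      (((hfcont.tendsto _).comp hU).neg).sub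
        ((((hφ''c.tendsto _).comp hU).mul hU').mul hU')
    have hden : Tendsto (fun z => deriv φ (U0 z)) l (nhds (deriv φ a)) :=
      (hφ'c.tendsto _).comp hU
    have := hnum.div hden (ne_of_gt (hCφ' a))
    rw [hfa] at this
    simp only [neg_zero, mul_zero, zero_mul, sub_zero, zero_div] at this
    exact this.congr fun z => (hU0''eq z).symm
  have hU0''top : Tendsto (deriv (deriv U0)) atTop (nhds 0) := hU0''lim atTop αp hU0p hfαp hU0'top
  have hU0''bot : Tendsto (deriv (deriv U0)) atBot (nhds 0) := hU0''lim atBot αm hU0m hfαm hU0'bot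
  -- second derivative of φ' ∘ U0
  have hwdf : deriv (fun y => deriv φ (U0 y)) =
      fun z => deriv (deriv φ) (U0 z) * deriv U0 z := funext (hchain (deriv φ) hφ'd)
  have hw''eq : ∀ z, deriv (deriv (fun y => deriv φ (U0 y))) z =
      deriv (deriv (deriv φ)) (U0 z) * deriv U0 z * deriv U0 z +
        deriv (deriv φ) (U0 z) * deriv (deriv U0) z := by
    intro z
    have hca : DifferentiableAt ℝ (fun z => deriv (deriv φ) (U0 z)) z :=
      DifferentiableAt.comp z (hφ''d (U0 z)) (hU0d1 z)
    rw [hwdf, deriv_fun_mul hca (hU0'd z), hchain (deriv (deriv φ)) hφ''d z]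
  have hw''lim : ∀ (l : Filter ℝ) (a : ℝ), Tendsto U0 l (nhds a) →
      Tendsto (deriv U0) l (nhds 0) → Tendsto (deriv (deriv U0)) l (nhds 0) →
      Tendsto (fun z => deriv (deriv (fun y => deriv φ (U0 y))) z) l (nhds 0) := by
    intro l a hU hU' hU''
    have h1 : Tendsto (fun z => deriv (deriv (deriv φ)) (U0 z) * deriv U0 z * deriv U0 z +
        deriv (deriv φ) (U0 z) * deriv (deriv U0) z) l
        (nhds (deriv (deriv (deriv φ)) a * 0 * 0 + deriv (deriv φ) a * 0)) :=
      ((((hφ'''c.tendsto _).comp hU).mul hU').mul hU').add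
        (((hφ''c.tendsto _).comp hU).mul hU'')
    simp only [mul_zero, add_zero] at h1
    exact h1.congr fun z => (hw''eq z).symm
  -- limits of g
  have hgtop : Tendsto (fun z => deriv f (U0 z) +
      deriv (deriv (fun y => deriv φ (U0 y))) z) atTop (nhds (deriv f αp)) := by
    have := ((hf'c.tendsto _).comp hU0p).add (hw''lim atTop αp hU0p hU0'top hU0''top)
    simpa using this
  have hgbot : Tendsto (fun z => deriv f (U0 z) +
      deriv (deriv (fun y => deriv φ (U0 y))) z) atBot (nhds (deriv f αm)) := by
    have := ((hf'c.tendsto _).comp hU0m).add (hw''lim atBot αm hU0m hU0'bot hU0''bot)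
    simpa using this
  -- continuity of g
  have hwC2 : ContDiff ℝ 2 (fun y => deriv φ (U0 y)) := (hφ3.of_le (by norm_num)).comp hU0C2
  have hw''cont : Continuous (deriv (deriv (fun y => deriv φ (U0 y)))) := by
    have hw1 : ContDiff ℝ 1 (deriv (fun y => deriv φ (U0 y))) :=
      (contDiff_succ_iff_deriv.mp
        (show ContDiff ℝ (1+1) (fun y => deriv φ (U0 y)) from by norm_num [hwC2])).2.2
    exact (contDiff_one_iff_deriv.mp hw1).2
  have hgcont : Continuous (fun z => deriv f (U0 z) +
      deriv (deriv (fun y => deriv φ (U0 y))) z) := (hf'c.comp hU0c).add hw''cont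
  -- the set J1 and its properties
  set J1 : Set ℝ := {z : ℝ | U0 z ∈ Icc αm (αm + b) ∪ Icc (αp - b) αp} with hJ1def
  have hJ1closed : IsClosed J1 := (isClosed_Icc.union isClosed_Icc).preimage hU0c
  have hJ1ne : J1.Nonempty := by
    obtain ⟨z, hz⟩ := (hU0m.eventually_lt_const (show αm < αm + b by linarith)).exists
    exact ⟨z, Or.inl ⟨(hlow z).le, hz.le⟩⟩
  -- a uniform negative bound for g on J1
  obtain ⟨c, hcneg, hcle⟩ : ∃ c : ℝ, c < 0 ∧ ∀ z ∈ J1,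
      deriv f (U0 z) + deriv (deriv (fun y => deriv φ (U0 y))) z ≤ c := by
    obtain ⟨Z1, hZ1⟩ := eventually_atBot.mp
      (hgbot.eventually_lt_const (show deriv f αm < deriv f αm / 2 by linarith))
    obtain ⟨Z2, hZ2⟩ := eventually_atTop.mp
      (hgtop.eventually_lt_const (show deriv f αp < deriv f αp / 2 by linarith))
    have hmidcpt : IsCompact (J1 ∩ Icc Z1 Z2) := isCompact_Icc.inter_left hJ1closed
    rcases (J1 ∩ Icc Z1 Z2).eq_empty_or_nonempty with hmide | hmidne
    · refine ⟨max (deriv f αm / 2) (deriv f αp / 2), by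
        apply max_lt <;> linarith, ?_⟩
      intro z hz
      rcases le_or_gt z Z1 with h | h
      · exact le_trans (hZ1 z h).le (le_max_left _ _)
      rcases le_or_gt Z2 z with h' | h'
      · exact le_trans (hZ2 z h').le (le_max_right _ _)
      · exfalso
        have : z ∈ J1 ∩ Icc Z1 Z2 := ⟨hz, h.le, h'.le⟩
        rw [hmide] at this
        exact this
    · obtain ⟨x0, hx0K, hx0max⟩ := hmidcpt.exists_isMaxOn hmidne hgcont.continuousOn
      refine ⟨max (max (deriv f αm / 2) (deriv f αp / 2))
        (deriv f (U0 x0) + deriv (deriv (fun y => deriv φ (U0 y))) x0), ?_, ?_⟩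
      · apply max_lt
        · apply max_lt <;> linarith
        · exact hbneg x0 hx0K.1
      · intro z hz
        rcases le_or_gt z Z1 with h | h
        · exact le_trans (hZ1 z h).le (le_trans (le_max_left _ _) (le_max_left _ _))
        rcases le_or_gt Z2 z with h' | h'
        · exact le_trans (hZ2 z h').le (le_trans (le_max_right _ _) (le_max_left _ _))
        · exact le_trans (hx0max ⟨hz, h.le, h'.le⟩) (le_max_right _ _)
  -- β is positive
  have hSne : ((fun z =>
      (deriv f (U0 z) + deriv (deriv (fun y => deriv φ (U0 y))) z) / 3) '' J1).Nonempty :=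
    hJ1ne.image _
  have hSub : ∀ x ∈ (fun z =>
      (deriv f (U0 z) + deriv (deriv (fun y => deriv φ (U0 y))) z) / 3) '' J1, x ≤ c / 3 := by
    rintro x ⟨z, hz, rfl⟩
    have := hcle z hz
    linarith
  have hSbdd : BddAbove ((fun z =>
      (deriv f (U0 z) + deriv (deriv (fun y => deriv φ (U0 y))) z) / 3) '' J1) :=
    ⟨c / 3, hSub⟩
  have hsup_le : sSup ((fun z =>
      (deriv f (U0 z) + deriv (deriv (fun y => deriv φ (U0 y))) z) / 3) '' J1) ≤ c / 3 :=
    csSup_le hSne hSub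
  have hβpos : 0 < β := by rw [hβ]; linarith
  -- on J1, g ≤ -3β
  have hgJ : ∀ z ∈ J1, deriv f (U0 z) + deriv (deriv (fun y => deriv φ (U0 y))) z ≤ -(3*β) := by
    intro z hz
    have hle : (deriv f (U0 z) + deriv (deriv (fun y => deriv φ (U0 y))) z) / 3 ≤
        sSup ((fun z =>
          (deriv f (U0 z) + deriv (deriv (fun y => deriv φ (U0 y))) z) / 3) '' J1) :=
      le_csSup hSbdd (mem_image_of_mem _ hz)
    have hβ' : sSup ((fun z =>
        (deriv f (U0 z) + deriv (deriv (fun y => deriv φ (U0 y))) z) / 3) '' J1) = -β := by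
      rw [hβ]; ring
    rw [hβ'] at hle
    linarith
  -- the inequality holds on J1 for every positive σ
  have hJcase : ∀ σ : ℝ, 0 < σ → ∀ z ∈ J1,
      3 * σ * β ≤ deriv U0 z -
        σ * (deriv f (U0 z) + deriv (deriv (fun y => deriv φ (U0 y))) z) := by
    intro σ hσ z hz
    have h1 := hgJ z hz
    have h2 := (hU0'pos z).le
    nlinarith [mul_le_mul_of_nonneg_left h1 hσ.le]
  -- complement of J1
  have hcompl : ∀ z : ℝ, z ∉ J1 → αm + b < U0 z ∧ U0 z < αp - b := by
    intro z hz
    rw [hJ1def, mem_setOf_eq, mem_union, not_or] at hz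
    obtain ⟨hz1, hz2⟩ := hz
    constructor
    · by_contra h
      exact hz1 ⟨(hlow z).le, not_lt.mp h⟩
    · by_contra h
      exact hz2 ⟨not_lt.mp h, (hhigh z).le⟩
  set Kc : Set ℝ := {z : ℝ | U0 z ∈ Icc (αm + b) (αp - b)} with hKdef
  have hKclosed : IsClosed Kc := isClosed_Icc.preimage hU0c
  obtain ⟨Z1, hZ1⟩ := eventually_atBot.mp
    (hU0m.eventually_lt_const (show αm < αm + b by linarith))
  obtain ⟨Z2, hZ2⟩ := eventually_atTop.mp
    (hU0p.eventually_const_lt (show αp - b < αp by linarith))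
  have hKsub : Kc ⊆ Icc Z1 Z2 := by
    intro z hz
    obtain ⟨h1, h2⟩ := hz
    constructor
    · by_contra h
      exact absurd h1 (not_le.mpr (hZ1 z (not_le.mp h).le))
    · by_contra h
      exact absurd h2 (not_le.mpr (hZ2 z (not_le.mp h).le))
  have hKcpt : IsCompact Kc := isCompact_Icc.of_isClosed_subset hKclosed hKsub
  rcases Kc.eq_empty_or_nonempty with hKe | hKne
  · refine ⟨hβpos, 1, one_pos, ?_⟩
    intro σ hσ0 _ z
    have hzJ : z ∈ J1 := by
      by_contra h
      have h2 := hcompl z h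
      have : z ∈ Kc := ⟨h2.1.le, h2.2.le⟩
      rw [hKe] at this
      exact this
    exact hJcase σ hσ0 z hzJ
  · obtain ⟨x1, hx1K, hx1min⟩ := hKcpt.exists_isMinOn hKne hU0'c.continuousOn
    obtain ⟨x2, hx2K, hx2max⟩ := hKcpt.exists_isMaxOn hKne hgcont.continuousOn
    have hm : 0 < deriv U0 x1 := hU0'pos x1
    set Mg : ℝ := deriv f (U0 x2) + deriv (deriv (fun y => deriv φ (U0 y))) x2 with hMgdef
    set D : ℝ := |Mg| + 3 * β + 1 with hDdef
    have hD : 0 < D := by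
      have := abs_nonneg Mg
      rw [hDdef]
      nlinarith
    refine ⟨hβpos, deriv U0 x1 / D, div_pos hm hD, ?_⟩
    intro σ hσ0 hσ1 z
    by_cases hz : z ∈ J1
    · exact hJcase σ hσ0 z hz
    · have h2 := hcompl z hz
      have hzK : z ∈ Kc := ⟨h2.1.le, h2.2.le⟩
      have hmle : deriv U0 x1 ≤ deriv U0 z := hx1min hzK
      have hgle : deriv f (U0 z) + deriv (deriv (fun y => deriv φ (U0 y))) z ≤ Mg :=
        hx2max hzK
      have h3 : Mg ≤ |Mg| := le_abs_self _
      have h4 : σ * D < deriv U0 x1 := (lt_div_iff₀ hD).mp hσ1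
      have h5 : σ * (deriv f (U0 z) + deriv (deriv (fun y => deriv φ (U0 y))) z) ≤ σ * Mg :=
        mul_le_mul_of_nonneg_left hgle hσ0.le
      have h6 : σ * Mg ≤ σ * |Mg| := mul_le_mul_of_nonneg_left h3 hσ0.le
      have h7 : σ * D = σ * |Mg| + 3 * σ * β + σ := by rw [hDdef]; ring
      linarith
end

section
/- Variational characterization of the surface tension. Define W(u) := -∫_{α_-}^{u} f(s) φ'(s) ds and, for C^1 functions v : R → R, the energy Ẽ(v) := ∫_R ( (1/2) v'(z)^2 + W(φ^{-1}(v(z))) ) dz. Let U_0 be as in the standing-wave hypotheses and set V_0 := φ ∘ U_0. Then: (i) for every C^1 function v : R → R with v(z) → φ(α_-) as z → -∞ and v(z) → φ(α_+) as z → +∞, one has Ẽ(v) ≥ ∫_{α_-}^{α_+} φ'(u) √(2 W(u)) du; (ii) Ẽ(V_0) = ∫_R (V_0'(z))^2 dz = ∫_{α_-}^{α_+} φ'(u) √(2 W(u)) du, so the infimum is attained at V_0. -/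
set_option maxHeartbeats 1000000
open MeasureTheory Real Set Filter Topology

lemma aux_young (x w : ℝ) (hw : 0 ≤ w) : |x| * Real.sqrt (2 * w) ≤ 1 / 2 * x ^ 2 + w := by
  nlinarith [sq_nonneg (|x| - Real.sqrt (2 * w)),
    Real.sq_sqrt (by linarith : (0:ℝ) ≤ 2 * w), Real.sqrt_nonneg (2 * w), sq_abs x]

lemma aux_ftc {h : ℝ → ℝ} (hc : Continuous h) (c t : ℝ) :
    HasDerivAt (fun u => ∫ s in c..u, h s) (h t) t :=
  intervalIntegral.integral_hasDerivAt_right (hc.intervalIntegrable _ _)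
    (hc.stronglyMeasurableAtFilter _ _) hc.continuousAt

lemma aux_deriv_nonneg {u : ℝ → ℝ} (hm : Monotone u) (hd : Differentiable ℝ u) (z : ℝ) :
    0 ≤ deriv u z := by
  have h := hasDerivAt_iff_tendsto_slope.mp (hd z).hasDerivAt
  refine ge_of_tendsto h ?_
  filter_upwards [self_mem_nhdsWithin] with y hy
  have hy' : y ≠ z := hy
  rw [slope_def_field]
  rcases hy'.lt_or_gt with h1 | h1
  · exact div_nonneg_iff.mpr (Or.inr ⟨by simpa using hm h1.le, by linarith⟩)
  · exact div_nonneg_iff.mpr (Or.inl ⟨by simpa using hm h1.le, by linarith⟩)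

lemma aux_neg_right {f : ℝ → ℝ} {a d : ℝ} (hd : HasDerivAt f d a) (hneg : d < 0) (h0 : f a = 0)
    {ε : ℝ} (hε : a < ε) : ∃ x, a < x ∧ x < ε ∧ f x < 0 := by
  have h := hasDerivAt_iff_tendsto_slope.mp hd
  have h1 : ∀ᶠ y in 𝓝[≠] a, slope f a y < 0 := h.eventually_lt_const hneg
  have h2 : ∀ᶠ y in 𝓝[>] a, slope f a y < 0 :=
    h1.filter_mono (nhdsWithin_mono a fun y hy => ne_of_gt hy)
  have h3 : ∀ᶠ y in 𝓝[>] a, y < ε :=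
    Filter.eventually_of_mem (Ioo_mem_nhdsGT hε) (fun y hy => hy.2)
  have h4 : ∀ᶠ y in 𝓝[>] a, a < y := eventually_mem_nhdsWithin
  obtain ⟨x, hx1, hx2, hx3⟩ := (h2.and (h3.and h4)).exists
  refine ⟨x, hx3, hx2, ?_⟩
  rw [slope_def_field, h0, sub_zero] at hx1
  rcases div_neg_iff.mp hx1 with ⟨_, hb⟩ | ⟨ha, _⟩
  · linarith
  · exact ha

lemma aux_pos_left {f : ℝ → ℝ} {a d : ℝ} (hd : HasDerivAt f d a) (hneg : d < 0) (h0 : f a = 0)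
    {ε : ℝ} (hε : ε < a) : ∃ x, ε < x ∧ x < a ∧ 0 < f x := by
  have h := hasDerivAt_iff_tendsto_slope.mp hd
  have h1 : ∀ᶠ y in 𝓝[≠] a, slope f a y < 0 := h.eventually_lt_const hneg
  have h2 : ∀ᶠ y in 𝓝[<] a, slope f a y < 0 :=
    h1.filter_mono (nhdsWithin_mono a fun y hy => ne_of_lt hy)
  have h3 : ∀ᶠ y in 𝓝[<] a, ε < y :=
    Filter.eventually_of_mem (Ioo_mem_nhdsLT hε) (fun y hy => hy.1)
  have h4 : ∀ᶠ y in 𝓝[<] a, y < a := eventually_mem_nhdsWithin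
  obtain ⟨x, hx1, hx2, hx3⟩ := (h2.and (h3.and h4)).exists
  refine ⟨x, hx2, hx3, ?_⟩
  rw [slope_def_field, h0, sub_zero] at hx1
  rcases div_neg_iff.mp hx1 with ⟨ha, hb⟩ | ⟨ha, hb⟩
  · linarith
  · linarith

/-- Variational characterization of the surface tension. The
energy `Ẽ(v) = ∫_ℝ ((1/2)(v')² + W(φ⁻¹(v)))` (with values in `[0,∞]`) of any
`C¹` profile connecting `φ(α₋)` to `φ(α₊)` is at least
`∫_{α₋}^{α₊} φ'(u)√(2W(u)) du`, and this bound is attained at `V₀ = φ ∘ U₀`,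
whose energy equals `∫_ℝ (V₀')² dz`. -/
theorem surface_tension_variational
    (f : ℝ → ℝ) (αm αc αp : ℝ)
    (hf : ContDiff ℝ 2 f)
    (hαs : αm < αc ∧ αc < αp)
    (hzeros : ∀ s : ℝ, f s = 0 ↔ s = αm ∨ s = αc ∨ s = αp)
    (hfm : deriv f αm < 0) (hfp : deriv f αp < 0) (hfc : 0 < deriv f αc)
    (hfbelow : ∀ s : ℝ, s < αm → 0 < f s) (hfabove : ∀ s : ℝ, αp < s → f s < 0)
    (φ : ℝ → ℝ) (Cφ : ℝ) (hCφ : 0 < Cφ)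
    (hφ : ContDiff ℝ 4 φ) (hφ' : ∀ s : ℝ, Cφ ≤ deriv φ s)
    (hbal : ∫ s in αm..αp, deriv φ s * f s = 0)
    (U0 : ℝ → ℝ)
    (hU0bdd : ∃ M : ℝ, ∀ z : ℝ, |U0 z| ≤ M)
    (hU0mono : StrictMono U0)
    (hU0C2 : ContDiff ℝ 2 U0)
    (hU0ode : ∀ z : ℝ, deriv (deriv (fun y => φ (U0 y))) z + f (U0 z) = 0)
    (hU0m : Tendsto U0 atBot (nhds αm))
    (hU0p : Tendsto U0 atTop (nhds αp))
    (hU0d : Tendsto (fun z => deriv (fun y => φ (U0 y)) z) atBot (nhds 0))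
    (ψ : ℝ → ℝ) (hψl : Function.LeftInverse ψ φ) (hψr : Function.RightInverse ψ φ)
    (W : ℝ → ℝ) (hW : ∀ u : ℝ, W u = -(∫ s in αm..u, f s * deriv φ s)) :
    (∀ v : ℝ → ℝ, ContDiff ℝ 1 v →
      Tendsto v atBot (nhds (φ αm)) → Tendsto v atTop (nhds (φ αp)) →
      ENNReal.ofReal (∫ u in αm..αp, deriv φ u * Real.sqrt (2 * W u))
        ≤ ∫⁻ z : ℝ, ENNReal.ofReal ((1 / 2) * (deriv v z) ^ 2 + W (ψ (v z)))) ∧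
    ((∫⁻ z : ℝ, ENNReal.ofReal
          ((1 / 2) * (deriv (fun y => φ (U0 y)) z) ^ 2 + W (ψ (φ (U0 z)))))
        = ENNReal.ofReal (∫ z : ℝ, (deriv (fun y => φ (U0 y)) z) ^ 2)) ∧
    (∫ z : ℝ, (deriv (fun y => φ (U0 y)) z) ^ 2
        = ∫ u in αm..αp, deriv φ u * Real.sqrt (2 * W u)) := by
  obtain ⟨hαmc, hαcp⟩ := hαs
  have hαmp : αm < αp := hαmc.trans hαcp
  -- basic regularity facts
  have hfdiff : Differentiable ℝ f := hf.differentiable (by norm_num)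
  have hfcont : Continuous f := hfdiff.continuous
  have hφdiff : Differentiable ℝ φ := hφ.differentiable (by norm_num)
  have hφcont : Continuous φ := hφdiff.continuous
  have hφ'cont : Continuous (deriv φ) := (contDiff_one_iff_deriv.mp (hφ.of_le (by norm_num))).2
  have hφ'pos : ∀ s, 0 < deriv φ s := fun s => lt_of_lt_of_le hCφ (hφ' s)
  have hφmono : StrictMono φ := strictMono_of_deriv_pos hφ'pos
  have hfφ'cont : Continuous (fun s => f s * deriv φ s) := hfcont.mul hφ'cont
  -- the potential W
  have hWd : ∀ u, HasDerivAt W (-(f u * deriv φ u)) u := by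
    intro u
    have h := (aux_ftc hfφ'cont αm u).neg
    exact h.congr_of_eventuallyEq (Filter.Eventually.of_forall (fun x => hW x))
  have hWcont : Continuous W :=
    continuous_iff_continuousAt.mpr (fun u => (hWd u).continuousAt)
  have hWm : W αm = 0 := by rw [hW]; simp
  have hbal' : (∫ s in αm..αp, f s * deriv φ s) = 0 := by
    have h : (∫ s in αm..αp, f s * deriv φ s) = ∫ s in αm..αp, deriv φ s * f s :=
      intervalIntegral.integral_congr (fun s _ => mul_comm _ _)
    rw [h, hbal]
  -- zeros of f
  have hf0m : f αm = 0 := (hzeros αm).mpr (Or.inl rfl)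
  have hf0c : f αc = 0 := (hzeros αc).mpr (Or.inr (Or.inl rfl))
  have hf0p : f αp = 0 := (hzeros αp).mpr (Or.inr (Or.inr rfl))
  -- sign of f on (αm, αc)
  have hfneg : ∀ s, αm < s → s < αc → f s < 0 := by
    intro s hs1 hs2
    rcases lt_trichotomy (f s) 0 with h | h | h
    · exact h
    · rcases (hzeros s).mp h with h' | h' | h' <;> [linarith; linarith; linarith]
    · exfalso
      obtain ⟨x, hx1, hx2, hx3⟩ := aux_neg_right (hfdiff αm).hasDerivAt hfm hf0m hs1
      obtain ⟨c, hc, hfc0⟩ := intermediate_value_Ioo hx2.le hfcont.continuousOn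
        (show (0:ℝ) ∈ Ioo (f x) (f s) from ⟨hx3, h⟩)
      rcases (hzeros c).mp hfc0 with h' | h' | h' <;>
        [(exact absurd hc.1 (by rw [h']; linarith));
         (exact absurd hc.2 (by rw [h']; linarith));
         (exact absurd hc.2 (by rw [h']; linarith))]
  -- sign of f on (αc, αp)
  have hfpos : ∀ s, αc < s → s < αp → 0 < f s := by
    intro s hs1 hs2
    rcases lt_trichotomy (f s) 0 with h | h | h
    · exfalso
      obtain ⟨x, hx1, hx2, hx3⟩ := aux_pos_left (hfdiff αp).hasDerivAt hfp hf0p hs2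
      obtain ⟨c, hc, hfc0⟩ := intermediate_value_Ioo hx1.le hfcont.continuousOn
        (show (0:ℝ) ∈ Ioo (f s) (f x) from ⟨h, hx3⟩)
      rcases (hzeros c).mp hfc0 with h' | h' | h' <;>
        [(exact absurd hc.1 (by rw [h']; linarith));
         (exact absurd hc.1 (by rw [h']; linarith));
         (exact absurd hc.2 (by rw [h']; linarith))]
    · rcases (hzeros s).mp h with h' | h' | h' <;> [linarith; linarith; linarith]
    · exact h
  -- convenient sign facts
  have hsgn1 : ∀ s, s ≤ αm → 0 ≤ f s := by
    intro s hs
    rcases hs.lt_or_eq with h | h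
    · exact (hfbelow s h).le
    · rw [h, hf0m]
  have hsgn2 : ∀ s, αm ≤ s → s ≤ αc → f s ≤ 0 := by
    intro s h1 h2
    rcases h1.lt_or_eq with h | h
    · rcases h2.lt_or_eq with h' | h'
      · exact (hfneg s h h').le
      · rw [h', hf0c]
    · rw [← h, hf0m]
  have hsgn3 : ∀ s, αc ≤ s → s ≤ αp → 0 ≤ f s := by
    intro s h1 h2
    rcases h1.lt_or_eq with h | h
    · rcases h2.lt_or_eq with h' | h'
      · exact (hfpos s h h').le
      · rw [h', hf0p]
    · rw [← h, hf0c]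
  have hsgn4 : ∀ s, αp ≤ s → f s ≤ 0 := by
    intro s hs
    rcases hs.lt_or_eq with h | h
    · exact (hfabove s h).le
    · rw [← h, hf0p]
  -- W is nonnegative
  have hW0 : ∀ u, 0 ≤ W u := by
    intro u
    rcases le_total u αm with h | h
    · have h1 : 0 ≤ ∫ s in u..αm, f s * deriv φ s :=
        intervalIntegral.integral_nonneg h (fun s hs => mul_nonneg (hsgn1 s hs.2) (hφ'pos s).le)
      have h2 : (∫ s in u..αm, f s * deriv φ s) = -(∫ s in αm..u, f s * deriv φ s) :=
        intervalIntegral.integral_symm αm u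
      rw [hW]; linarith
    rcases le_total u αc with h2 | h2
    · have h1 : 0 ≤ ∫ s in αm..u, -(f s * deriv φ s) :=
        intervalIntegral.integral_nonneg h
          (fun s hs => neg_nonneg.mpr (mul_nonpos_of_nonpos_of_nonneg
            (hsgn2 s hs.1 (hs.2.trans h2)) (hφ'pos s).le))
      rw [intervalIntegral.integral_neg] at h1
      rw [hW]; linarith
    rcases le_total u αp with h3 | h3
    · have hadd : (∫ s in αm..u, f s * deriv φ s) + ∫ s in u..αp, f s * deriv φ s
          = ∫ s in αm..αp, f s * deriv φ s :=
        intervalIntegral.integral_add_adjacent_intervals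
          (hfφ'cont.intervalIntegrable _ _) (hfφ'cont.intervalIntegrable _ _)
      have h1 : 0 ≤ ∫ s in u..αp, f s * deriv φ s :=
        intervalIntegral.integral_nonneg h3
          (fun s hs => mul_nonneg (hsgn3 s (h2.trans hs.1) hs.2) (hφ'pos s).le)
      rw [hbal'] at hadd
      rw [hW]; linarith
    · have hadd : (∫ s in αm..αp, f s * deriv φ s) + ∫ s in αp..u, f s * deriv φ s
          = ∫ s in αm..u, f s * deriv φ s :=
        intervalIntegral.integral_add_adjacent_intervals
          (hfφ'cont.intervalIntegrable _ _) (hfφ'cont.intervalIntegrable _ _)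
      have h1 : 0 ≤ ∫ s in αp..u, -(f s * deriv φ s) :=
        intervalIntegral.integral_nonneg h3
          (fun s hs => neg_nonneg.mpr (mul_nonpos_of_nonpos_of_nonneg
            (hsgn4 s hs.1) (hφ'pos s).le))
      rw [intervalIntegral.integral_neg] at h1
      rw [hbal'] at hadd
      rw [hW]; linarith
  -- ψ is continuous
  have hψmono : Monotone ψ := by
    intro a b hab
    by_contra hc
    push_neg at hc
    have h := hφmono hc
    rw [hψr a, hψr b] at h
    exact absurd hab (not_le.mpr h)
  have hψcont : Continuous ψ := hψmono.continuous_of_surjective hψl.surjective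
  -- the integrand g and the target constant I
  set g : ℝ → ℝ := fun u => deriv φ u * Real.sqrt (2 * W u) with hgdef
  have hgcont : Continuous g := hφ'cont.mul ((continuous_const.mul hWcont).sqrt)
  have hgnn : ∀ u, 0 ≤ g u := fun u => mul_nonneg (hφ'pos u).le (Real.sqrt_nonneg _)
  set I : ℝ := ∫ u in αm..αp, g u with hIdef
  set h₂ : ℝ → ℝ := fun t => Real.sqrt (2 * W (ψ t)) with hh2def
  have hh2cont : Continuous h₂ := (continuous_const.mul (hWcont.comp hψcont)).sqrt
  have hh2nn : ∀ t, 0 ≤ h₂ t := fun t => Real.sqrt_nonneg _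
  set G : ℝ → ℝ := fun t => ∫ s in (φ αm)..t, h₂ s with hGdef
  have hGd : ∀ t, HasDerivAt G (h₂ t) t := fun t => aux_ftc hh2cont (φ αm) t
  have hGcont : Continuous G := continuous_iff_continuousAt.mpr fun t => (hGd t).continuousAt
  have hGm : G (φ αm) = 0 := intervalIntegral.integral_same
  have hCOV : I = G (φ αp) := by
    have h := intervalIntegral.integral_comp_smul_deriv (f := φ) (f' := deriv φ) (g := h₂)
      (a := αm) (b := αp) (fun x _ => (hφdiff x).hasDerivAt) hφ'cont.continuousOn hh2cont
    calc I = ∫ x in αm..αp, deriv φ x • (h₂ ∘ φ) x := by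
            rw [hIdef]
            apply intervalIntegral.integral_congr
            intro x _
            simp only [hgdef, hh2def, Function.comp_apply, smul_eq_mul, hψl x]
      _ = ∫ x in (φ αm)..(φ αp), h₂ x := h
      _ = G (φ αp) := by rw [hGdef]
  -- Part (i)
  have part1 : ∀ v : ℝ → ℝ, ContDiff ℝ 1 v → Tendsto v atBot (𝓝 (φ αm)) →
      Tendsto v atTop (𝓝 (φ αp)) →
      ENNReal.ofReal I ≤ ∫⁻ z : ℝ, ENNReal.ofReal ((1 / 2) * (deriv v z) ^ 2 + W (ψ (v z))) := by
    intro v hv hvm hvp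
    have hdvcont : Continuous (deriv v) := (contDiff_one_iff_deriv.mp hv).2
    have hvdiff : Differentiable ℝ v := (contDiff_one_iff_deriv.mp hv).1
    have hvcont : Continuous v := hvdiff.continuous
    set ρ : ℝ → ℝ := fun z => (1 / 2) * (deriv v z) ^ 2 + W (ψ (v z)) with hρdef
    have hρcont : Continuous ρ :=
      (continuous_const.mul (hdvcont.pow 2)).add (hWcont.comp (hψcont.comp hvcont))
    have hρnn : ∀ z, 0 ≤ ρ z := fun z => add_nonneg (by positivity) (hW0 _)
    have hgcd : ∀ z, HasDerivAt (fun z => G (v z)) (h₂ (v z) * deriv v z) z :=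
      fun z => (hGd (v z)).comp z (hvdiff z).hasDerivAt
    have hder_cont : Continuous (fun z => h₂ (v z) * deriv v z) :=
      (hh2cont.comp hvcont).mul hdvcont
    have hptw : ∀ z, h₂ (v z) * deriv v z ≤ ρ z := by
      intro z
      calc h₂ (v z) * deriv v z ≤ |h₂ (v z) * deriv v z| := le_abs_self _
        _ = |deriv v z| * h₂ (v z) := by
            rw [abs_mul, abs_of_nonneg (hh2nn _), mul_comm]
        _ ≤ ρ z := aux_young _ _ (hW0 _)
    have key : ∀ n : ℝ, 0 ≤ n →
        ENNReal.ofReal (G (v n) - G (v (-n))) ≤ ∫⁻ z : ℝ, ENNReal.ofReal (ρ z) := by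
      intro n hn
      have hab : (-n : ℝ) ≤ n := by linarith
      have h1 : ∫ z in (-n)..n, h₂ (v z) * deriv v z = G (v n) - G (v (-n)) :=
        intervalIntegral.integral_eq_sub_of_hasDerivAt (fun z _ => hgcd z)
          (hder_cont.intervalIntegrable _ _)
      have h2 : (∫ z in (-n)..n, h₂ (v z) * deriv v z) ≤ ∫ z in (-n)..n, ρ z :=
        intervalIntegral.integral_mono_on hab (hder_cont.intervalIntegrable _ _)
          (hρcont.intervalIntegrable _ _) (fun x _ => hptw x)
      have h3 : ENNReal.ofReal (∫ z in (-n)..n, ρ z) ≤ ∫⁻ z : ℝ, ENNReal.ofReal (ρ z) := by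
        rw [intervalIntegral.integral_of_le hab]
        rw [MeasureTheory.ofReal_integral_eq_lintegral_ofReal (hρcont.integrableOn_Ioc)
          (Filter.Eventually.of_forall hρnn)]
        exact MeasureTheory.setLIntegral_le_lintegral _ _
      exact le_trans (ENNReal.ofReal_le_ofReal (by linarith)) h3
    have hlim : Tendsto (fun n : ℝ => ENNReal.ofReal (G (v n) - G (v (-n)))) atTop
        (𝓝 (ENNReal.ofReal I)) := by
      have h1 : Tendsto (fun n : ℝ => G (v n) - G (v (-n))) atTop (𝓝 (G (φ αp) - G (φ αm))) :=
        ((hGcont.tendsto _).comp hvp).sub ((hGcont.tendsto _).comp (hvm.comp tendsto_neg_atTop_atBot))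
      rw [hGm, sub_zero, ← hCOV] at h1
      exact (ENNReal.continuous_ofReal.tendsto _).comp h1
    exact le_of_tendsto hlim (eventually_atTop.mpr ⟨0, fun n hn => key n hn⟩)
  -- the standing wave V = φ ∘ U0
  set V : ℝ → ℝ := fun y => φ (U0 y) with hVdef
  have hU0diff : Differentiable ℝ U0 := hU0C2.differentiable (by norm_num)
  have hdU0cont : Continuous (deriv U0) := (contDiff_one_iff_deriv.mp (hU0C2.of_le (by norm_num))).2
  have hVC2 : ContDiff ℝ 2 V := (hφ.of_le (by norm_num)).comp hU0C2
  have hVd : ∀ z, HasDerivAt V (deriv φ (U0 z) * deriv U0 z) z :=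
    fun z => ((hφdiff (U0 z)).hasDerivAt).comp z (hU0diff z).hasDerivAt
  have hdV : ∀ z, deriv V z = deriv φ (U0 z) * deriv U0 z := fun z => (hVd z).deriv
  have hdVcont : Continuous (deriv V) := (contDiff_one_iff_deriv.mp (hVC2.of_le (by norm_num))).2
  have hdVdiff : Differentiable ℝ (deriv V) := by
    have h2 : ((1 : WithTop ℕ∞) + 1) = 2 := by norm_num
    have h := contDiff_succ_iff_deriv.mp (h2 ▸ hVC2 : ContDiff ℝ (1 + 1) V)
    exact h.2.2.differentiable (by norm_num)
  -- equipartition of energy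
  set E : ℝ → ℝ := fun z => 1 / 2 * (deriv V z) ^ 2 - W (U0 z) with hEdef
  have hEderiv : ∀ z, HasDerivAt E 0 z := by
    intro z
    have h1 : HasDerivAt (deriv V) (deriv (deriv V) z) z := (hdVdiff z).hasDerivAt
    have h2 : HasDerivAt (fun w => 1 / 2 * (deriv V w) ^ 2)
        (1 / 2 * (2 * deriv V z ^ 1 * deriv (deriv V) z)) z := (h1.pow 2).const_mul (1 / 2)
    have h3 : HasDerivAt (fun w => W (U0 w)) (-(f (U0 z) * deriv φ (U0 z)) * deriv U0 z) z :=
      (hWd (U0 z)).comp z (hU0diff z).hasDerivAt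
    have h4 := h2.sub h3
    refine h4.congr_deriv ?_
    have hode := hU0ode z
    have hode' : deriv (deriv V) z = -f (U0 z) := by linarith
    rw [hode', hdV z]
    ring
  have hEconst : ∀ x y : ℝ, E x = E y :=
    is_const_of_deriv_eq_zero (fun z => (hEderiv z).differentiableAt)
      (fun z => (hEderiv z).deriv)
  have hEzero : ∀ z, E z = 0 := by
    have t1 : Tendsto (fun z => 1 / 2 * (deriv V z) ^ 2) atBot (𝓝 (1 / 2 * (0:ℝ) ^ 2)) :=
      (hU0d.pow 2).const_mul (1 / 2)
    have t2 : Tendsto (fun z => W (U0 z)) atBot (𝓝 (W αm)) := (hWcont.tendsto αm).comp hU0m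
    have t3 : Tendsto E atBot (𝓝 (1 / 2 * (0:ℝ) ^ 2 - W αm)) := t1.sub t2
    have t4 : Tendsto E atBot (𝓝 (0 : ℝ)) := by
      have : (1 / 2 * (0:ℝ) ^ 2 - W αm) = 0 := by rw [hWm]; ring
      rwa [this] at t3
    intro z
    have t5 : Tendsto E atBot (𝓝 (E z)) := by
      have hEc : E = fun _ => E z := funext fun x => hEconst x z
      rw [hEc]
      exact tendsto_const_nhds
    exact tendsto_nhds_unique t5 t4
  have hEq : ∀ z, W (U0 z) = 1 / 2 * (deriv V z) ^ 2 := by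
    intro z
    have h := hEzero z
    rw [hEdef] at h
    linarith [h]
  -- sign of deriv V
  have hdU0nn : ∀ z, 0 ≤ deriv U0 z := aux_deriv_nonneg hU0mono.monotone hU0diff
  have hdVnn : ∀ z, 0 ≤ deriv V z := by
    intro z
    rw [hdV z]
    exact mul_nonneg (hφ'pos _).le (hdU0nn z)
  have hsqrt : ∀ z, Real.sqrt (2 * W (U0 z)) = deriv V z := by
    intro z
    rw [hEq z, show 2 * (1 / 2 * (deriv V z) ^ 2) = (deriv V z) ^ 2 by ring]
    exact Real.sqrt_sq (hdVnn z)
  -- pointwise identity for the energy density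
  have hdens : ∀ z, (1 / 2) * (deriv V z) ^ 2 + W (ψ (V z)) = (deriv V z) ^ 2 := by
    intro z
    have hψV : ψ (V z) = U0 z := by rw [hVdef]; exact hψl (U0 z)
    rw [hψV, hEq z]
    ring
  -- change of variables on finite intervals
  have hsq2 : ∀ z, (deriv V z) ^ 2 = deriv U0 z • g (U0 z) := by
    intro z
    rw [hgdef]
    simp only [smul_eq_mul]
    rw [hsqrt z, hdV z]
    ring
  have hCOV2 : ∀ n : ℝ, (∫ z in (-n)..n, (deriv V z) ^ 2) = ∫ u in (U0 (-n))..(U0 n), g u := by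
    intro n
    have h := intervalIntegral.integral_comp_smul_deriv (f := U0) (f' := deriv U0) (g := g)
      (a := -n) (b := n) (fun x _ => (hU0diff x).hasDerivAt) hdU0cont.continuousOn hgcont
    calc (∫ z in (-n)..n, (deriv V z) ^ 2) = ∫ z in (-n)..n, deriv U0 z • (g ∘ U0) z :=
          intervalIntegral.integral_congr (fun x _ => hsq2 x)
      _ = ∫ u in (U0 (-n))..(U0 n), g u := h
  -- U0 stays within [αm, αp]
  have hmem : ∀ z, αm ≤ U0 z ∧ U0 z ≤ αp := by
    intro z
    constructor
    · exact le_of_tendsto hU0m (eventually_atBot.mpr ⟨z, fun y hy => hU0mono.monotone hy⟩)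
    · exact ge_of_tendsto hU0p (eventually_atTop.mpr ⟨z, fun y hy => hU0mono.monotone hy⟩)
  have hgInt : IntervalIntegrable g volume αm αp := hgcont.intervalIntegrable _ _
  -- integrability of (deriv V)²
  have hbound : ∀ n : ℝ, 0 ≤ n → (∫ z in (-n)..n, ‖(deriv V z) ^ 2‖) ≤ I := by
    intro n hn
    have hab : (-n : ℝ) ≤ n := by linarith
    have hnorm : (∫ z in (-n)..n, ‖(deriv V z) ^ 2‖) = ∫ z in (-n)..n, (deriv V z) ^ 2 :=
      intervalIntegral.integral_congr (fun x _ => by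
        simp [Real.norm_eq_abs, abs_of_nonneg (sq_nonneg (deriv V x))])
    rw [hnorm, hCOV2 n, hIdef]
    exact intervalIntegral.integral_mono_interval (hmem (-n)).1 (hU0mono.monotone hab)
      (hmem n).2 (Filter.Eventually.of_forall hgnn) hgInt
  have hInt : Integrable (fun z => (deriv V z) ^ 2) := by
    refine integrable_of_intervalIntegral_norm_bounded (l := atTop)
      (a := fun n : ℝ => -n) (b := fun n : ℝ => n) I
      (fun n => (hdVcont.pow 2).integrableOn_Ioc) tendsto_neg_atTop_atBot tendsto_id ?_
    exact eventually_atTop.mpr ⟨0, fun n hn => hbound n hn⟩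
  -- Part (iii)
  have htend1 : Tendsto (fun n : ℝ => ∫ z in (-n)..n, (deriv V z) ^ 2) atTop
      (𝓝 (∫ z : ℝ, (deriv V z) ^ 2)) :=
    intervalIntegral_tendsto_integral hInt tendsto_neg_atTop_atBot tendsto_id
  set G₂ : ℝ → ℝ := fun t => ∫ u in αm..t, g u with hG2def
  have hG2d : ∀ t, HasDerivAt G₂ (g t) t := fun t => aux_ftc hgcont αm t
  have hG2cont : Continuous G₂ := continuous_iff_continuousAt.mpr fun t => (hG2d t).continuousAt
  have hsplit : ∀ x y : ℝ, (∫ u in x..y, g u) = G₂ y - G₂ x := by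
    intro x y
    have h := intervalIntegral.integral_add_adjacent_intervals
      (hgcont.intervalIntegrable αm x : IntervalIntegrable g volume αm x)
      (hgcont.intervalIntegrable x y : IntervalIntegrable g volume x y)
    have hx : G₂ x = ∫ u in αm..x, g u := by rw [hG2def]
    have hy : G₂ y = ∫ u in αm..y, g u := by rw [hG2def]
    rw [hx, hy]; linarith
  have htend2 : Tendsto (fun n : ℝ => ∫ z in (-n)..n, (deriv V z) ^ 2) atTop
      (𝓝 (G₂ αp - G₂ αm)) := by
    have heq : (fun n : ℝ => ∫ z in (-n)..n, (deriv V z) ^ 2)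
        = fun n : ℝ => G₂ (U0 n) - G₂ (U0 (-n)) := by
      funext n
      rw [hCOV2 n, hsplit]
    rw [heq]
    exact ((hG2cont.tendsto _).comp hU0p).sub ((hG2cont.tendsto _).comp (hU0m.comp tendsto_neg_atTop_atBot))
  have part3 : (∫ z : ℝ, (deriv V z) ^ 2) = I := by
    have hG2m : G₂ αm = 0 := intervalIntegral.integral_same
    have hG2p : G₂ αp = I := by rw [hG2def, hIdef]
    have := tendsto_nhds_unique htend1 htend2
    rw [this, hG2m, hG2p, sub_zero]
  -- Part (ii)
  have part2 : (∫⁻ z : ℝ, ENNReal.ofReal ((1 / 2) * (deriv V z) ^ 2 + W (ψ (V z))))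
      = ENNReal.ofReal (∫ z : ℝ, (deriv V z) ^ 2) := by
    have h1 : (∫⁻ z : ℝ, ENNReal.ofReal ((1 / 2) * (deriv V z) ^ 2 + W (ψ (V z))))
        = ∫⁻ z : ℝ, ENNReal.ofReal ((deriv V z) ^ 2) :=
      lintegral_congr (fun z => by rw [hdens z])
    rw [h1, ← MeasureTheory.ofReal_integral_eq_lintegral_ofReal hInt
      (Filter.Eventually.of_forall (fun z => sq_nonneg _))]
  exact ⟨part1, part2, part3⟩
end
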